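/- arXiv:1804.09953 — 5 statements merged into one kernel-verified Lean document; each statement's English description precedes it below -/
import Mathlib

section
/- For a ∈ (0,1), let γ(a) = 0.1a + 0.9, q'(a) = (a/4)/(1 + a/2), and K₂(a,c,q) = (1+c)^q·(√(1+c²-ac))^{1-q}. Then K₂(a, a·γ(a), q'(a)) > 1 for all a ∈ (0,1). -/
/-!
Taking logarithms and using `log x ≥ 1 - 1/x` on both factors reduces the claim to a rational
inequality. The second factor is below `1`, since `1 + c² - a c = 1 - c (a - c)`, but only
slightly: for `c = a γ(a)` the gap `a - c = a (1 - a) / 10` is small, and the gain `q log (1 + c)`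
of the first factor outweighs the loss.
-/

open Real

lemma one_lt_rpow_mul_rpow_of_pos {x y p r : ℝ} (hx : 0 < x) (hy : 0 < y) (hp : 0 ≤ p)
    (hr : 0 ≤ r) (h : 0 < p * (1 - x⁻¹) + r * (1 - y⁻¹)) : 1 < x ^ p * y ^ r := by
  have hlog : 0 < log (x ^ p * y ^ r) := by
    rw [log_mul (rpow_pos_of_pos hx p).ne' (rpow_pos_of_pos hy r).ne', log_rpow hx, log_rpow hy]
    calc 0 < p * (1 - x⁻¹) + r * (1 - y⁻¹) := h
      _ ≤ p * log x + r * log y := by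
        gcongr
        · exact one_sub_inv_le_log_of_pos hx
        · exact one_sub_inv_le_log_of_pos hy
  exact (log_pos_iff (by positivity)).mp hlog

lemma sqrt_rpow {x : ℝ} (hx : 0 ≤ x) (s : ℝ) : √x ^ s = x ^ (s / 2) := by
  rw [sqrt_eq_rpow, ← rpow_mul hx, one_div_mul_eq_div]

lemma one_lt_K2_of_lt {a c q : ℝ} (hc : 0 < c) (hca : c ≤ a) (ha : a ≤ 1) (hq0 : 0 ≤ q)
    (hq1 : q ≤ 1) (h : (1 - q) * (a - c) * (1 + c) < 2 * q * (1 + c ^ 2 - a * c)) :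
    1 < (1 + c) ^ q * √(1 + c ^ 2 - a * c) ^ (1 - q) := by
  have hD : 0 < 1 + c ^ 2 - a * c := by nlinarith
  rw [sqrt_rpow hD.le]
  refine one_lt_rpow_mul_rpow_of_pos (by linarith) hD hq0 (by linarith) ?_
  have hsum : q * (1 - (1 + c)⁻¹) + (1 - q) / 2 * (1 - (1 + c ^ 2 - a * c)⁻¹) =
      c * (2 * q * (1 + c ^ 2 - a * c) - (1 - q) * (a - c) * (1 + c)) /
        (2 * (1 + c) * (1 + c ^ 2 - a * c)) := by
    generalize hDdef : 1 + c ^ 2 - a * c = D at hD ⊢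
    have hc1 : 1 + c ≠ 0 := by linarith
    field_simp
    linear_combination (-(1 - q) * (1 + c)) * hDdef
  rw [hsum]
  have : 0 < 2 * q * (1 + c ^ 2 - a * c) - (1 - q) * (a - c) * (1 + c) := by linarith
  positivity

lemma K2_log_gap_lt {a c q : ℝ} (ha0 : 0 < a) (ha1 : a < 1) (hc : c = a * (a + 9) / 10)
    (hq : q = a / (4 + 2 * a)) :
    (1 - q) * (a - c) * (1 + c) < 2 * q * (1 + c ^ 2 - a * c) := by
  have hc0 : 0 < c := by rw [hc]; positivity
  have hc1 : c < 1 := by rw [hc]; nlinarith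
  have hD : 9 / 10 < 1 + c ^ 2 - a * c := by nlinarith
  have hmargin : 0 < 20 * (1 + c ^ 2 - a * c) - (4 + a) * (1 - a) * (1 + c) := by
    nlinarith [mul_pos ha0 (sub_pos.mpr ha1)]
  have hdiff : 2 * q * (1 + c ^ 2 - a * c) - (1 - q) * (a - c) * (1 + c) =
      a * (20 * (1 + c ^ 2 - a * c) - (4 + a) * (1 - a) * (1 + c)) / (10 * (4 + 2 * a)) := by
    have hgap : a - c = a * (1 - a) / 10 := by rw [hc]; ring
    rw [hq, hgap]
    field_simp
    ring
  rw [← sub_pos, hdiff]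
  positivity

/-- K₂(a, a·γ(a), q'(a)) > 1 for all a ∈ (0,1), where γ(a) = 0.1a + 0.9,
q'(a) = (a/4)/(1+a/2), and K₂(a,c,q) = (1+c)^q·(√(1+c²-ac))^{1-q}. -/
theorem K2_gt_one (a : ℝ) (ha0 : 0 < a) (ha1 : a < 1)
    (γ q' c : ℝ) (hγ : γ = 0.1 * a + 0.9) (hq' : q' = (a / 4) / (1 + a / 2))
    (hc : c = a * γ) :
    (1 + c) ^ q' * (Real.sqrt (1 + c ^ 2 - a * c)) ^ (1 - q') > 1 := by
  have hc' : c = a * (a + 9) / 10 := by rw [hc, hγ]; ring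
  have hq : q' = a / (4 + 2 * a) := by rw [hq']; field_simp; ring
  have hc0 : 0 < c := by rw [hc']; positivity
  have hca : c ≤ a := by rw [hc']; nlinarith
  have hq0 : 0 < q' := by rw [hq]; positivity
  have hq1 : q' < 1 := by rw [hq, div_lt_one (by linarith)]; linarith
  exact one_lt_K2_of_lt hc0 hca ha1.le hq0.le hq1.le (K2_log_gap_lt ha0 ha1 hc' hq)
end

section
/- For a ∈ (0,1), let γ(a) = 0.1a + 0.9, q'(a) = (a/4)/(1 + a/2), and K₂(a,c,q) = (1+c)^q·(√(1+c²-ac))^{1-q}. Then log(K₂(a, a·γ(a), q'(a))) > a·γ(a)·q'(a)/4 for all a ∈ (0,1). -/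
/-!
Write `d = c (a - c)`, so that `1 + c² - a c = 1 - d` and
`log K₂ = q log (1 + c) + (1 - q)/2 · log (1 - d)`.
The elementary bounds `log (1 + c) ≥ c/2` (for `0 ≤ c ≤ 1`) and `log (1 - d) ≥ -d/(1 - d)`
reduce the claim to the rational inequality `(1 - q) (a - c) / (1 - d) < q/2`.
For `c = a γ(a)` one has `a - c = a (1 - a)/10`, which makes `d ≤ 1/10` and the left side
at most `(4/9) · a/(4 + 2a)`, while `q'(a)/2 = (1/2) · a/(4 + 2a)`.
-/

namespace Real

lemma half_le_log_one_add {c : ℝ} (hc0 : 0 ≤ c) (hc1 : c ≤ 1) : c / 2 ≤ log (1 + c) := by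
  refine le_trans ?_ (le_log_one_add_of_nonneg hc0)
  rw [div_le_div_iff₀ two_pos (by linarith)]
  nlinarith

lemma neg_div_one_sub_le_log_one_sub {d : ℝ} (hd : d < 1) : -(d / (1 - d)) ≤ log (1 - d) := by
  have h := one_sub_inv_le_log_of_pos (sub_pos.mpr hd)
  have h_eq : 1 - (1 - d)⁻¹ = -(d / (1 - d)) := by
    field_simp [(sub_pos.mpr hd).ne']
    ring
  rwa [h_eq] at h

lemma log_rpow_mul_sqrt_rpow {u v : ℝ} (hu : 0 < u) (hv : 0 < v) (q : ℝ) :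
    log (u ^ q * sqrt v ^ (1 - q)) = q * log u + (1 - q) / 2 * log v := by
  have hsv : 0 < sqrt v := sqrt_pos.mpr hv
  rw [log_mul (rpow_pos_of_pos hu q).ne' (rpow_pos_of_pos hsv _).ne', log_rpow hu,
    log_rpow hsv, log_sqrt hv.le]
  ring

lemma le_log_K2 {a c q : ℝ} (hc0 : 0 ≤ c) (hc1 : c ≤ 1) (hq0 : 0 ≤ q) (hq1 : q ≤ 1)
    (hd : c * (a - c) < 1) :
    q * (c / 2) - (1 - q) / 2 * (c * (a - c) / (1 - c * (a - c))) ≤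
      log ((1 + c) ^ q * sqrt (1 + c ^ 2 - a * c) ^ (1 - q)) := by
  have hv : 1 + c ^ 2 - a * c = 1 - c * (a - c) := by ring
  rw [hv, log_rpow_mul_sqrt_rpow (by linarith) (by linarith)]
  have h1 := mul_le_mul_of_nonneg_left (half_le_log_one_add hc0 hc1) hq0
  have h2 := mul_le_mul_of_nonneg_left (neg_div_one_sub_le_log_one_sub hd)
    (by linarith : 0 ≤ (1 - q) / 2)
  linarith

end Real

/-- log(K₂(a, a·γ(a), q'(a))) > a·γ(a)·q'(a)/4 for all a ∈ (0,1). -/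
theorem log_K2_gt (a : ℝ) (ha0 : 0 < a) (ha1 : a < 1)
    (γ q' c : ℝ) (hγ : γ = 0.1 * a + 0.9) (hq' : q' = (a / 4) / (1 + a / 2))
    (hc : c = a * γ) :
    Real.log ((1 + c) ^ q' * (Real.sqrt (1 + c ^ 2 - a * c)) ^ (1 - q')) >
      a * γ * q' / 4 := by
  rw [← hc]
  have hq : q' = a / (4 + 2 * a) := by rw [hq']; field_simp; ring
  have hac : a - c = a * (1 - a) / 10 := by rw [hc, hγ]; ring
  have hc0 : 0 < c := by rw [hc, hγ]; positivity
  have hc1 : c < 1 := by nlinarith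
  have hd0 : 0 < c * (a - c) := mul_pos hc0 (by rw [hac]; nlinarith)
  have hd1 : c * (a - c) ≤ 1 / 10 := by
    rw [hac]; nlinarith [mul_pos ha0 (sub_pos.2 ha1), mul_pos hc0 ha0]
  have hq0 : 0 < q' := by rw [hq]; positivity
  have hq1 : q' < 1 := by rw [hq, div_lt_one (by linarith)]; linarith
  refine lt_of_lt_of_le ?_ (Real.le_log_K2 hc0.le hc1.le hq0.le hq1.le (by linarith))
  have hfrac : c * (a - c) / (1 - c * (a - c)) ≤ c * (a - c) / (9 / 10) :=
    div_le_div_of_nonneg_left hd0.le (by norm_num) (by linarith)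
  have hrational : (1 - q') / 2 * (c * (a - c) / (9 / 10)) < q' * c / 4 := by
    rw [hq, hac]
    field_simp
    nlinarith [mul_pos hc0 ha0]
  linarith [mul_le_mul_of_nonneg_left hfrac (by linarith : 0 ≤ (1 - q') / 2)]
end

section
/- For all a ∈ (0,1), one has 0.1a + 0.9 > μ₂(a), where μ₂(a) = √( (a⁴ + 4a³ + 16a² + 32a + 64)/(4a⁴) ) + (a² - 2a - 8)/(2a²). -/
/-- γ(a) = 0.1a + 0.9 dominates μ₂(a) on (0,1). -/
theorem gamma_gt_mu2 (a : ℝ) (ha0 : 0 < a) (ha1 : a < 1) :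
    0.1 * a + 0.9 >
      Real.sqrt ((a ^ 4 + 4 * a ^ 3 + 16 * a ^ 2 + 32 * a + 64) / (4 * a ^ 4)) +
        (a ^ 2 - 2 * a - 8) / (2 * a ^ 2) := by
  have ha2 : (0:ℝ) < a ^ 2 := by positivity
  have hL : 0 < 0.1 * a + 0.9 - (a ^ 2 - 2 * a - 8) / (2 * a ^ 2) := by
    have hneg : (a ^ 2 - 2 * a - 8) / (2 * a ^ 2) < 0 :=
      div_neg_of_neg_of_pos (by nlinarith) (by positivity)
    nlinarith
  have key : (a ^ 4 + 4 * a ^ 3 + 16 * a ^ 2 + 32 * a + 64) / (4 * a ^ 4)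
      < (0.1 * a + 0.9 - (a ^ 2 - 2 * a - 8) / (2 * a ^ 2)) ^ 2 := by
    have hEq : 0.1 * a + 0.9 - (a ^ 2 - 2 * a - 8) / (2 * a ^ 2)
        = (0.2 * a ^ 3 + 0.8 * a ^ 2 + 2 * a + 8) / (2 * a ^ 2) := by
      field_simp
      ring
    rw [hEq, div_pow, div_lt_div_iff₀ (by positivity) (by positivity)]
    ring_nf
    nlinarith [pow_pos ha0 6, pow_pos ha0 5, pow_pos ha0 4, pow_pos ha0 3, pow_pos ha0 2]
  have := (Real.sqrt_lt' hL).mpr key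
  linarith
end

section
/- For a ∈ (0,1), let γ(a) = 0.1a + 0.9, p'(a) = (a/4)/(1 - a/2), and K₁(a,c,p) = (1+c-ac)^p·(√(1+c²-ac))^{1-p}. Then K₁(a, a·γ(a), p'(a)) > 1 for all a ∈ (0,1). -/
/-!
Write `b = 1 + c - a c` and `s = 1 + c² - a c`. Taking logarithms and using `log x ≥ 1 - 1/x`
for `b` and for `s = (√s)²`, it suffices that `(1 - p) (1/s - 1) < 2 p (1 - 1/b)`. For
`c = a γ(a)` one has `a - c = a (1 - a) / 10`, so `1 - s = c (a - c)` and `b - 1 = c (1 - a)`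
share the factor `c (1 - a)`; with `p = a / (4 - 2a)` the condition then reduces to
`c (1 - a) (4 - a) < 16 + 3a`, which holds because `c < 1`.
-/

open Real

theorem one_lt_rpow_mul_sqrt_rpow {x s p : ℝ} (hx : 0 < x) (hs : 0 < s) (hp0 : 0 ≤ p)
    (hp1 : p ≤ 1) (h : (1 - p) * (1 - s) * x < 2 * p * (x - 1) * s) :
    1 < x ^ p * √s ^ (1 - p) := by
  have h' : (1 - p) * (s⁻¹ - 1) < 2 * p * (1 - x⁻¹) :=
    calc (1 - p) * (s⁻¹ - 1) = (1 - p) * (1 - s) * x / (x * s) := by field_simp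
      _ < 2 * p * (x - 1) * s / (x * s) := by gcongr
      _ = 2 * p * (1 - x⁻¹) := by field_simp
  rw [← log_pos_iff (by positivity), log_mul (by positivity) (by positivity), log_rpow hx,
    log_rpow (sqrt_pos.2 hs), log_sqrt hs.le]
  nlinarith [mul_le_mul_of_nonneg_left (one_sub_inv_le_log_of_pos hx) hp0,
    mul_le_mul_of_nonneg_left (one_sub_inv_le_log_of_pos hs) (sub_nonneg.2 hp1)]

theorem K1_gamma_ineq {a c : ℝ} (ha0 : 0 < a) (ha1 : a < 1) (hc : c = a * (0.1 * a + 0.9)) :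
    (4 - 3 * a) * (1 - (1 + c ^ 2 - a * c)) * (1 + c - a * c)
      < 2 * a * (1 + c - a * c - 1) * (1 + c ^ 2 - a * c) := by
  have hc_sub : a - c = a * (1 - a) / 10 := by rw [hc]; ring
  have hc0 : 0 < c := by rw [hc]; positivity
  have hc1 : c < 1 := by linarith [mul_pos ha0 (sub_pos.2 ha1)]
  have hreduced : (4 - 3 * a) * (1 + c - a * c) < 20 * (1 + c ^ 2 - a * c) := by
    nlinarith [mul_pos hc0 (sub_pos.2 ha1)]
  have hfactor : 0 < c * (a * (1 - a) / 10) := by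
    have := sub_pos.2 ha1
    positivity
  calc _ = c * (a * (1 - a) / 10) * ((4 - 3 * a) * (1 + c - a * c)) := by
        rw [← hc_sub]; ring
    _ < c * (a * (1 - a) / 10) * (20 * (1 + c ^ 2 - a * c)) := by gcongr
    _ = _ := by ring

/-- K₁(a, a·γ(a), p'(a)) > 1 for all a ∈ (0,1), where γ(a) = 0.1a + 0.9,
p'(a) = (a/4)/(1-a/2), and K₁(a,c,p) = (1+c-ac)^p·(√(1+c²-ac))^{1-p}. -/
theorem K1_gt_one (a : ℝ) (ha0 : 0 < a) (ha1 : a < 1)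
    (γ p' c : ℝ) (hγ : γ = 0.1 * a + 0.9) (hp' : p' = (a / 4) / (1 - a / 2))
    (hc : c = a * γ) :
    (1 + c - a * c) ^ p' * (Real.sqrt (1 + c ^ 2 - a * c)) ^ (1 - p') > 1 := by
  rw [hγ] at hc
  have hc0 : 0 < c := by rw [hc]; positivity
  have hc1 : c < 1 := by nlinarith
  have hp'_mul : p' * (4 - 2 * a) = a := by
    rw [hp']; field_simp [show (2 : ℝ) - a ≠ 0 by linarith]; ring
  have hb : 0 < 1 + c - a * c := by nlinarith
  have hs : 0 < 1 + c ^ 2 - a * c := by nlinarith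
  refine one_lt_rpow_mul_sqrt_rpow hb hs (by nlinarith) (by nlinarith) ?_
  refine lt_of_mul_lt_mul_left ?_ (by linarith : (0 : ℝ) ≤ 4 - 2 * a)
  linear_combination K1_gamma_ineq ha0 ha1 hc
    - ((1 - (1 + c ^ 2 - a * c)) * (1 + c - a * c)
      + 2 * (1 + c - a * c - 1) * (1 + c ^ 2 - a * c)) * hp'_mul
end

section
/- For all a ∈ (0,1), one has 0.1a + 0.9 > μ₁(a), where μ₁(a) = [ (-a³ + a² + 6a - 8) + √(a⁶ - 2a⁵ + 9a⁴ - 20a³ + 48a² - 96a + 64) ] / (2a²(1-a)). -/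
/-- γ(a) = 0.1a + 0.9 dominates μ₁(a) on (0,1), where
μ₁(a) = [(-a³+a²+6a-8) + √(a⁶-2a⁵+9a⁴-20a³+48a²-96a+64)]/(2a²(1-a)). -/
theorem gamma_gt_mu1 (a : ℝ) (ha0 : 0 < a) (ha1 : a < 1) :
    0.1 * a + 0.9 >
      ((-a ^ 3 + a ^ 2 + 6 * a - 8) +
        Real.sqrt (a ^ 6 - 2 * a ^ 5 + 9 * a ^ 4 - 20 * a ^ 3 + 48 * a ^ 2 -
          96 * a + 64)) / (2 * a ^ 2 * (1 - a)) := by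
  have h1 : (0:ℝ) < 1 - a := by linarith
  have hD : 0 < 2 * a ^ 2 * (1 - a) := by positivity
  have hT : (0:ℝ) < -0.2 * a ^ 4 - 0.6 * a ^ 3 + 0.8 * a ^ 2 - 6 * a + 8 := by
    have h4 : a ^ 4 ≤ 1 := by nlinarith
    have h3 : a ^ 3 ≤ 1 := by nlinarith
    nlinarith [sq_nonneg a]
  have hlt : a ^ 6 - 2 * a ^ 5 + 9 * a ^ 4 - 20 * a ^ 3 + 48 * a ^ 2 -
      96 * a + 64 < (-0.2 * a ^ 4 - 0.6 * a ^ 3 + 0.8 * a ^ 2 - 6 * a + 8) ^ 2 := by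
    have key : (-0.2 * a ^ 4 - 0.6 * a ^ 3 + 0.8 * a ^ 2 - 6 * a + 8) ^ 2
        - (a ^ 6 - 2 * a ^ 5 + 9 * a ^ 4 - 20 * a ^ 3 + 48 * a ^ 2 -
        96 * a + 64) = a ^ 2 * (1 - a) ^ 2 *
        (4/5 + 12/5 * a - 9/25 * a ^ 2 + 8/25 * a ^ 3 + 1/25 * a ^ 4) := by
      norm_num; ring
    nlinarith [mul_pos (mul_pos (pow_pos ha0 2) (pow_pos h1 2))
      (show (0:ℝ) < 4/5 + 12/5 * a - 9/25 * a ^ 2 + 8/25 * a ^ 3 + 1/25 * a ^ 4 by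
        nlinarith [pow_pos ha0 3, pow_pos ha0 4, sq_nonneg a])]
  have hs : Real.sqrt (a ^ 6 - 2 * a ^ 5 + 9 * a ^ 4 - 20 * a ^ 3 + 48 * a ^ 2 -
      96 * a + 64) < -0.2 * a ^ 4 - 0.6 * a ^ 3 + 0.8 * a ^ 2 - 6 * a + 8 :=
    (Real.sqrt_lt' hT).mpr hlt
  rw [gt_iff_lt, div_lt_iff₀ hD]
  nlinarith [hs]
end
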